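/- arXiv:2308.00347 — 3 statements merged into one kernel-verified Lean document; each statement's English description precedes it below -/
import Mathlib

section
/- Let φ be a Bernstein function with representation φ(λ) = bλ + ∫₀^∞ (1 - e^{-λt}) μ(dt), where b ≥ 0 and μ is a nonnegative measure on (0,∞) with ∫₀^∞ (1 ∧ t) μ(dt) < ∞. Then for every n ∈ ℕ there is a constant C(n) such that λ^n |φ^{(n)}(λ)| ≤ C(n) φ(λ) for all λ > 0. -/
/-!
Differentiating under the integral sign, `φ⁽ⁿ⁾(λ)` is the `n`-th derivative of `bλ` plus
`∫ ∂ⁿ_λ (1 - e^{-λt}) μ(dt)`, where `∂ⁿ_λ (1 - e^{-λt}) = (-1)ⁿ⁻¹ tⁿ e^{-λt}` for `n ≥ 1`.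
With `x = λt` we get `λⁿ tⁿ e^{-λt} = xⁿ e^{-x} ≤ n! min(1, x) ≤ 2 n! (1 - e^{-x})`, hence
`λⁿ |φ⁽ⁿ⁾(λ)| ≤ bλ + 2 n! ∫ (1 - e^{-λt}) μ(dt) ≤ 2 n! φ(λ)`. Since
`min(1, λt) ≤ max(1, λ) min(1, t)`, the same estimate supplies the integrable dominations.
-/

open Set Filter MeasureTheory Real

namespace Bernstein

theorem one_sub_exp_neg_nonneg {x : ℝ} (hx : 0 ≤ x) : 0 ≤ 1 - exp (-x) :=
  sub_nonneg.2 (exp_le_one_iff.2 (neg_nonpos.2 hx))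

theorem one_sub_exp_neg_le_min (x : ℝ) : 1 - exp (-x) ≤ min 1 x :=
  le_min (by linarith [exp_pos (-x)]) (by linarith [one_sub_le_exp_neg x])

theorem min_one_le_two_mul_one_sub_exp_neg {x : ℝ} (hx : 0 ≤ x) :
    min 1 x ≤ 2 * (1 - exp (-x)) := by
  rcases le_total x 1 with hx1 | hx1
  · have hexp : exp (-x) * (1 + x) ≤ 1 := by
      calc exp (-x) * (1 + x) ≤ exp (-x) * exp x := by
            gcongr; linarith [add_one_le_exp x]
        _ = 1 := by rw [← exp_add, neg_add_cancel, exp_zero]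
    -- `e^{-x} ≤ 1/(1+x) ≤ 1 - x/2` on `[0, 1]`
    nlinarith [exp_pos (-x), min_le_right 1 x]
  · have : exp (-x) ≤ exp (-1) := exp_le_exp.2 (neg_le_neg hx1)
    linarith [exp_neg_one_lt_half, min_le_left 1 x]

theorem pow_mul_exp_neg_le_factorial_mul_min {n : ℕ} (hn : n ≠ 0) {x : ℝ} (hx : 0 ≤ x) :
    x ^ n * exp (-x) ≤ n.factorial * min 1 x := by
  have hfact : (1 : ℝ) ≤ n.factorial := by exact_mod_cast n.factorial_pos
  rcases le_total x 1 with hx1 | hx1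
  · rw [min_eq_right hx1]
    calc x ^ n * exp (-x) ≤ x * 1 := by
          gcongr
          · exact pow_le_of_le_one hx hx1 hn
          · exact exp_le_one_iff.2 (neg_nonpos.2 hx)
      _ ≤ n.factorial * x := by nlinarith
  · rw [min_eq_left hx1, mul_one, exp_neg, ← div_eq_mul_inv, div_le_iff₀ (exp_pos x),
      ← div_le_iff₀' (by positivity)]
    exact pow_div_factorial_le_exp x hx n

theorem pow_mul_exp_neg_le_two_mul_factorial_mul {n : ℕ} (hn : n ≠ 0) {x : ℝ} (hx : 0 ≤ x) :
    x ^ n * exp (-x) ≤ 2 * n.factorial * (1 - exp (-x)) :=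
  calc x ^ n * exp (-x) ≤ n.factorial * min 1 x := pow_mul_exp_neg_le_factorial_mul_min hn hx
    _ ≤ n.factorial * (2 * (1 - exp (-x))) := by
        gcongr; exact min_one_le_two_mul_one_sub_exp_neg hx
    _ = 2 * n.factorial * (1 - exp (-x)) := by ring

theorem min_one_mul_le (l : ℝ) {t : ℝ} (ht : 0 ≤ t) :
    min 1 (l * t) ≤ max 1 l * min 1 t := by
  rcases le_total t 1 with h | h
  · rw [min_eq_right h]
    exact (min_le_right _ _).trans (by gcongr; exact le_max_right 1 l)
  · rw [min_eq_left h, mul_one]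
    exact (min_le_left _ _).trans (le_max_left 1 l)

/-- The `n`-th derivative of `l ↦ 1 - exp (-(l * t))`. -/
noncomputable def kernel : ℕ → ℝ → ℝ → ℝ
  | 0, t, l => 1 - exp (-(l * t))
  | n + 1, t, l => (-1) ^ n * t ^ (n + 1) * exp (-(l * t))

theorem hasDerivAt_kernel (n : ℕ) (t l : ℝ) :
    HasDerivAt (kernel n t) (kernel (n + 1) t l) l := by
  have hexp : HasDerivAt (fun x => exp (-(x * t))) (-t * exp (-(l * t))) l := by
    simpa [mul_comm] using (((hasDerivAt_id l).mul_const t).neg).exp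
  cases n with
  | zero =>
    show HasDerivAt (fun x => 1 - exp (-(x * t))) _ l
    exact (hexp.const_sub 1).congr_deriv (by simp [kernel])
  | succ n =>
    show HasDerivAt (fun x => (-1) ^ n * t ^ (n + 1) * exp (-(x * t))) _ l
    exact (hexp.const_mul ((-1) ^ n * t ^ (n + 1))).congr_deriv
      (by simp only [kernel]; ring)

theorem continuous_kernel (n : ℕ) (l : ℝ) : Continuous fun t => kernel n t l := by
  cases n <;> simp only [kernel] <;> fun_prop

theorem kernel_zero_nonneg {t l : ℝ} (ht : 0 ≤ t) (hl : 0 ≤ l) : 0 ≤ kernel 0 t l :=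
  one_sub_exp_neg_nonneg (mul_nonneg hl ht)

theorem abs_kernel_succ {n : ℕ} {t : ℝ} (ht : 0 ≤ t) (l : ℝ) :
    |kernel (n + 1) t l| = t ^ (n + 1) * exp (-(l * t)) := by
  simp only [kernel, abs_mul, abs_pow, abs_neg, abs_one, one_pow, one_mul, abs_exp,
    abs_of_nonneg ht]

theorem abs_kernel_succ_le_of_le {n : ℕ} {t x y : ℝ} (ht : 0 ≤ t) (hxy : x ≤ y) :
    |kernel (n + 1) t y| ≤ |kernel (n + 1) t x| := by
  rw [abs_kernel_succ ht, abs_kernel_succ ht]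
  gcongr

theorem pow_mul_abs_kernel_le (n : ℕ) {t l : ℝ} (ht : 0 ≤ t) (hl : 0 ≤ l) :
    l ^ n * |kernel n t l| ≤ 2 * n.factorial * kernel 0 t l := by
  cases n with
  | zero =>
    have := kernel_zero_nonneg ht hl
    rw [pow_zero, one_mul, abs_of_nonneg this, Nat.factorial_zero, Nat.cast_one]
    linarith
  | succ n =>
    rw [abs_kernel_succ ht, ← mul_assoc, ← mul_pow]
    exact pow_mul_exp_neg_le_two_mul_factorial_mul n.succ_ne_zero (mul_nonneg hl ht)

theorem abs_kernel_le (n : ℕ) {t l : ℝ} (ht : 0 ≤ t) (hl : 0 < l) :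
    |kernel n t l| ≤ 2 * n.factorial * max 1 l / l ^ n * min 1 t := by
  have hln : 0 < l ^ n := pow_pos hl n
  calc |kernel n t l| ≤ 2 * n.factorial * kernel 0 t l / l ^ n := by
        rw [le_div_iff₀' hln]; exact pow_mul_abs_kernel_le n ht hl.le
    _ ≤ 2 * n.factorial * (max 1 l * min 1 t) / l ^ n := by
        gcongr
        exact (one_sub_exp_neg_le_min (l * t)).trans (min_one_mul_le l ht)
    _ = 2 * n.factorial * max 1 l / l ^ n * min 1 t := by ring

/-- The `n`-th derivative of `l ↦ b * l`. -/
def linearDeriv (b : ℝ) : ℕ → ℝ → ℝ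
  | 0, l => b * l
  | 1, _ => b
  | _ + 2, _ => 0

theorem hasDerivAt_linearDeriv (b : ℝ) (n : ℕ) (l : ℝ) :
    HasDerivAt (linearDeriv b n) (linearDeriv b (n + 1) l) l := by
  match n with
  | 0 => exact (hasDerivAt_id l).const_mul b |>.congr_deriv (mul_one b)
  | 1 => exact hasDerivAt_const l b
  | _ + 2 => exact hasDerivAt_const l 0

theorem pow_mul_abs_linearDeriv_le {b : ℝ} (hb : 0 ≤ b) (n : ℕ) {l : ℝ} (hl : 0 ≤ l) :
    l ^ n * |linearDeriv b n l| ≤ b * l := by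
  match n with
  | 0 => simp [linearDeriv, abs_of_nonneg (mul_nonneg hb hl)]
  | 1 => simp [linearDeriv, abs_of_nonneg hb, mul_comm]
  | _ + 2 => simp [linearDeriv]; positivity

section Integral

variable {ν : Measure ℝ}

theorem integrable_kernel (hν : Integrable (fun t => min 1 t) ν) (hν₀ : ∀ᵐ t ∂ν, 0 ≤ t)
    (n : ℕ) {l : ℝ} (hl : 0 < l) : Integrable (fun t => kernel n t l) ν :=
  (hν.const_mul _).mono' (continuous_kernel n l).aestronglyMeasurable
    (hν₀.mono fun _ ht => abs_kernel_le n ht hl)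

theorem hasDerivAt_integral_kernel (hν : Integrable (fun t => min 1 t) ν) (hν₀ : ∀ᵐ t ∂ν, 0 ≤ t)
    (n : ℕ) {l : ℝ} (hl : 0 < l) :
    HasDerivAt (fun x => ∫ t, kernel n t x ∂ν) (∫ t, kernel (n + 1) t l ∂ν) l := by
  refine (hasDerivAt_integral_of_dominated_loc_of_deriv_le (s := Ioi (l / 2))
    (bound := fun t => |kernel (n + 1) t (l / 2)|) (Ioi_mem_nhds (half_lt_self hl))
    (Eventually.of_forall fun x => (continuous_kernel n x).aestronglyMeasurable)
    (integrable_kernel hν hν₀ n hl) (continuous_kernel (n + 1) l).aestronglyMeasurable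
    ?_ (integrable_kernel hν hν₀ (n + 1) (half_pos hl)).abs
    (Eventually.of_forall fun t x _ => hasDerivAt_kernel n t x)).2
  -- on `x > l/2` the derivative `± t^{n+1} e^{-xt}` is dominated by its value at `l/2`
  exact hν₀.mono fun t ht x hx => abs_kernel_succ_le_of_le ht (le_of_lt hx)

theorem pow_mul_abs_integral_kernel_le (hν : Integrable (fun t => min 1 t) ν)
    (hν₀ : ∀ᵐ t ∂ν, 0 ≤ t) (n : ℕ) {l : ℝ} (hl : 0 < l) :
    l ^ n * |∫ t, kernel n t l ∂ν| ≤ 2 * n.factorial * ∫ t, kernel 0 t l ∂ν := by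
  have hpow : l ^ n * |∫ t, kernel n t l ∂ν| = ‖∫ t, l ^ n * kernel n t l ∂ν‖ := by
    rw [integral_const_mul, Real.norm_eq_abs, abs_mul, abs_of_pos (pow_pos hl n)]
  rw [hpow, ← integral_const_mul]
  exact norm_integral_le_of_norm_le ((integrable_kernel hν hν₀ 0 hl).const_mul _)
    (hν₀.mono fun t ht => by
      rw [Real.norm_eq_abs, abs_mul, abs_of_pos (pow_pos hl n)]
      exact pow_mul_abs_kernel_le n ht hl.le)

theorem integral_kernel_zero_nonneg (hν₀ : ∀ᵐ t ∂ν, 0 ≤ t) {l : ℝ} (hl : 0 ≤ l) :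
    0 ≤ ∫ t, kernel 0 t l ∂ν :=
  integral_nonneg_of_ae (hν₀.mono fun _ ht => kernel_zero_nonneg ht hl)

theorem iteratedDeriv_eqOn_add_integral_kernel (hν : Integrable (fun t => min 1 t) ν)
    (hν₀ : ∀ᵐ t ∂ν, 0 ≤ t) {φ : ℝ → ℝ} {b : ℝ}
    (hφ : EqOn φ (fun l => b * l + ∫ t, kernel 0 t l ∂ν) (Ioi 0)) (n : ℕ) :
    EqOn (iteratedDeriv n φ) (fun l => linearDeriv b n l + ∫ t, kernel n t l ∂ν) (Ioi 0) := by
  induction n with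
  | zero => simpa [linearDeriv] using hφ
  | succ n ih =>
    intro l hl
    rw [iteratedDeriv_succ, (ih.eventuallyEq_of_mem (isOpen_Ioi.mem_nhds hl)).deriv_eq]
    exact ((hasDerivAt_linearDeriv b n l).add (hasDerivAt_integral_kernel hν hν₀ n hl)).deriv

end Integral

end Bernstein

open Bernstein in
/-- If `φ(λ) = bλ + ∫₀^∞ (1 - e^{-λt}) μ(dt)` with `b ≥ 0` and
`∫₀^∞ (1 ∧ t) μ(dt) < ∞`, then for every `n` there is `C(n)` with
`λ^n |φ^{(n)}(λ)| ≤ C(n) φ(λ)` for all `λ > 0`. -/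
theorem bernstein_iteratedDeriv_bound (φ : ℝ → ℝ) (b : ℝ) (hb : 0 ≤ b)
    (μ : Measure ℝ)
    (hμ : ∫⁻ t in Set.Ioi (0 : ℝ), ENNReal.ofReal (min 1 t) ∂μ ≠ ⊤)
    (hφ : ∀ l > (0 : ℝ),
      φ l = b * l + ∫ t in Set.Ioi (0 : ℝ), (1 - Real.exp (-(l * t))) ∂μ) :
    ∀ n : ℕ, ∃ C : ℝ, 0 < C ∧ ∀ l > (0 : ℝ),
      l ^ n * |iteratedDeriv n φ l| ≤ C * φ l := by
  set ν := μ.restrict (Ioi 0)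
  have hν₀ : ∀ᵐ t ∂ν, (0 : ℝ) ≤ t :=
    (ae_restrict_mem measurableSet_Ioi).mono fun _ ht => le_of_lt ht
  have hν : Integrable (fun t => min 1 t) ν :=
    (lintegral_ofReal_ne_top_iff_integrable (by fun_prop)
      (hν₀.mono fun _ ht => le_min zero_le_one ht)).1 hμ
  have hφ' : EqOn φ (fun l => b * l + ∫ t, kernel 0 t l ∂ν) (Ioi 0) := hφ
  intro n
  refine ⟨2 * n.factorial, by positivity, fun l hl => ?_⟩
  have hfact : (1 : ℝ) ≤ n.factorial := by exact_mod_cast n.factorial_pos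
  have hI := integral_kernel_zero_nonneg hν₀ hl.le
  rw [iteratedDeriv_eqOn_add_integral_kernel hν hν₀ hφ' n hl, hφ' hl]
  calc l ^ n * |linearDeriv b n l + ∫ t, kernel n t l ∂ν|
      ≤ l ^ n * |linearDeriv b n l| + l ^ n * |∫ t, kernel n t l ∂ν| := by
        rw [← mul_add]; gcongr; exact abs_add_le _ _
    _ ≤ b * l + 2 * n.factorial * ∫ t, kernel 0 t l ∂ν :=
        add_le_add (pow_mul_abs_linearDeriv_le hb n hl.le)
          (pow_mul_abs_integral_kernel_le hν hν₀ n hl)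
    _ ≤ 2 * n.factorial * (b * l + ∫ t, kernel 0 t l ∂ν) := by
        nlinarith [mul_nonneg hb hl.le]
end

section
/- Let φ : (0,∞) → (0,∞) be an increasing bijection satisfying the lower scaling condition c₀ (R/r)^{δ₀} ≤ φ(R)/φ(r) for 0 < r < R with δ₀ ∈ (0,1], c₀ > 0. Fix d ∈ ℕ, k ∈ ℕ₀, ν > 0, and t > 0. Then ∫_{ℝ^d} min( t^{-νk} (φ^{-1}(t^{-1}))^{d/2}, t^{ν-νk} (φ(|x|^{-2}))^ν / |x|^d ) dx ≤ C t^{-νk}, where C depends only on d, c₀, δ₀, k, ν. -/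
/-!
In polar coordinates the integral becomes `∫₀^∞ y^(d-1) f(y) dy` with `f` the minimum. Let `a`
be the radius with `a⁻² = φ⁻¹(t⁻¹)`. On `(0, a]` bound `f` by its first term, which equals
`t^(-νk) a^(-d)`; on `(a, ∞)` the lower scaling condition between `y⁻²` and `a⁻²` gives
`φ(y⁻²) ≤ c₀⁻¹ (a/y)^(2δ₀) t⁻¹`, so the second term is at most
`t^(-νk) c₀^(-ν) a^ε y^(-d-ε)` with `ε = 2δ₀ν > 0`. Both pieces integrate to multiples of
`t^(-νk)`, independently of `a`.
-/

open Set MeasureTheory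

def HasLowerScaling (φ : ℝ → ℝ) (c₀ δ₀ : ℝ) : Prop :=
  ∀ r R : ℝ, 0 < r → r < R → c₀ * (R / r) ^ δ₀ ≤ φ R / φ r

namespace HasLowerScaling

variable {φ : ℝ → ℝ} {c₀ δ₀ : ℝ}

lemma le_mul_rpow_div (h : HasLowerScaling φ c₀ δ₀) (hc₀ : 0 < c₀) {r R : ℝ} (hr : 0 < r)
    (hrR : r < R) (hφr : 0 < φ r) : φ r ≤ c₀⁻¹ * (r / R) ^ δ₀ * φ R := by
  have hR : 0 < R := hr.trans hrR
  have hscale : c₀ * ((r / R) ^ δ₀)⁻¹ * φ r ≤ φ R := by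
    rw [← Real.inv_rpow (div_nonneg hr.le hR.le), inv_div]
    exact (le_div_iff₀ hφr).mp (h r R hr hrR)
  calc φ r = c₀⁻¹ * (r / R) ^ δ₀ * (c₀ * ((r / R) ^ δ₀)⁻¹ * φ r) := by field_simp
    _ ≤ c₀⁻¹ * (r / R) ^ δ₀ * φ R := by gcongr

lemma rpow_apply_rpow_neg_two_le (h : HasLowerScaling φ c₀ δ₀) (hc₀ : 0 < c₀)
    (hpos : ∀ x > (0 : ℝ), 0 < φ x) {a y ν : ℝ} (ha : 0 < a) (hay : a < y) (hν : 0 ≤ ν) :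
    φ (y ^ (-2 : ℝ)) ^ ν ≤ c₀ ^ (-ν) * φ (a ^ (-2 : ℝ)) ^ ν * (a / y) ^ (2 * δ₀ * ν) := by
  have hy : 0 < y := ha.trans hay
  have hφy := hpos _ (Real.rpow_pos_of_pos hy (-2))
  have hφa := hpos _ (Real.rpow_pos_of_pos ha (-2))
  have hlt : y ^ (-2 : ℝ) < a ^ (-2 : ℝ) := Real.rpow_lt_rpow_of_neg ha hay (by norm_num)
  have hratio : (y ^ (-2 : ℝ) / a ^ (-2 : ℝ)) ^ δ₀ = (a / y) ^ (2 * δ₀) := by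
    have hsq : y ^ (-2 : ℝ) / a ^ (-2 : ℝ) = (a / y) ^ (2 : ℝ) := by
      rw [Real.rpow_neg hy.le, Real.rpow_neg ha.le, Real.div_rpow ha.le hy.le]
      field_simp
    rw [hsq, ← Real.rpow_mul (by positivity)]
  calc φ (y ^ (-2 : ℝ)) ^ ν ≤ (c₀⁻¹ * (a / y) ^ (2 * δ₀) * φ (a ^ (-2 : ℝ))) ^ ν := by
        gcongr
        rw [← hratio]
        exact h.le_mul_rpow_div hc₀ (by positivity) hlt hφy
    _ = c₀ ^ (-ν) * φ (a ^ (-2 : ℝ)) ^ ν * (a / y) ^ (2 * δ₀ * ν) := by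
        rw [Real.mul_rpow (by positivity) hφa.le, Real.mul_rpow (by positivity) (by positivity),
          Real.inv_rpow hc₀.le, ← Real.rpow_neg hc₀.le, ← Real.rpow_mul (by positivity)]
        ring

lemma mul_rpow_div_rpow_le (h : HasLowerScaling φ c₀ δ₀) (hc₀ : 0 < c₀)
    (hpos : ∀ x > (0 : ℝ), 0 < φ x) {a y t ν s r : ℝ} (ha : 0 < a) (hay : a < y) (ht : 0 < t)
    (hν : 0 ≤ ν) (hφa : φ (a ^ (-2 : ℝ)) = t⁻¹) :
    t ^ (ν - s) * φ (y ^ (-2 : ℝ)) ^ ν / y ^ r ≤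
      t ^ (-s) * c₀ ^ (-ν) * a ^ (2 * δ₀ * ν) * y ^ (-r - 2 * δ₀ * ν) := by
  have hy : 0 < y := ha.trans hay
  calc t ^ (ν - s) * φ (y ^ (-2 : ℝ)) ^ ν / y ^ r
      ≤ t ^ (ν - s) * (c₀ ^ (-ν) * φ (a ^ (-2 : ℝ)) ^ ν * (a / y) ^ (2 * δ₀ * ν)) / y ^ r := by
        gcongr; exact h.rpow_apply_rpow_neg_two_le hc₀ hpos ha hay hν
    _ = t ^ (-s) * c₀ ^ (-ν) * a ^ (2 * δ₀ * ν) * y ^ (-r - 2 * δ₀ * ν) := by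
        rw [hφa, Real.inv_rpow ht.le, Real.div_rpow ha.le hy.le, Real.rpow_sub ht,
          Real.rpow_neg ht.le, Real.rpow_sub hy, Real.rpow_neg hy.le]
        field_simp

end HasLowerScaling

lemma integral_Ioi_pow_mul_le {n : ℕ} (hn : 0 < n) {a K L ε : ℝ} (ha : 0 < a) (hε : 0 < ε)
    {f : ℝ → ℝ} (hf0 : ∀ y > 0, 0 ≤ f y) (hfK : ∀ y ∈ Ioc 0 a, f y ≤ K * a ^ (-(n : ℝ)))
    (hfL : ∀ y > a, f y ≤ L * a ^ ε * y ^ (-(n : ℝ) - ε)) :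
    ∫ y in Ioi 0, y ^ (n - 1) * f y ≤ K / n + L / ε := by
  set near : ℝ → ℝ := fun y ↦ K * a ^ (-(n : ℝ)) * y ^ (n - 1)
  set far : ℝ → ℝ := fun y ↦ L * a ^ ε * y ^ (-1 - ε)
  have hnear_int : IntegrableOn near (Ioc 0 a) :=
    (continuous_const.mul (continuous_pow _)).integrableOn_Ioc
  have hfar_int : IntegrableOn far (Ioi a) :=
    (integrableOn_Ioi_rpow_of_lt (by linarith) ha).const_mul _
  have hnear : ∫ y in Ioc 0 a, near y = K / n := by
    have hn' : ((n - 1 : ℕ) : ℝ) + 1 = n := by rw [Nat.cast_pred hn]; ring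
    rw [integral_const_mul, ← intervalIntegral.integral_of_le ha.le, integral_pow,
      Nat.sub_add_cancel hn, hn', zero_pow hn.ne', sub_zero, Real.rpow_neg ha.le,
      Real.rpow_natCast]
    field_simp
  have hfar : ∫ y in Ioi a, far y = L / ε := by
    rw [integral_const_mul, integral_Ioi_rpow_of_lt (by linarith) ha,
      show -1 - ε + 1 = -ε by ring, Real.rpow_neg ha.le]
    field_simp
  calc ∫ y in Ioi 0, y ^ (n - 1) * f y
      ≤ ∫ y in Ioi 0, ((Ioc 0 a).indicator near y + (Ioi a).indicator far y) := by
        refine integral_mono_of_nonneg ?_ ?_ ?_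
        · filter_upwards [ae_restrict_mem measurableSet_Ioi] with y (hy : 0 < y)
          exact mul_nonneg (by positivity) (hf0 y hy)
        · exact ((hnear_int.integrable_indicator measurableSet_Ioc).add
            (hfar_int.integrable_indicator measurableSet_Ioi)).restrict
        · filter_upwards [ae_restrict_mem measurableSet_Ioi] with y (hy : 0 < y)
          rcases le_or_gt y a with hya | hay
          · have hmem : y ∈ Ioc 0 a := ⟨hy, hya⟩
            simp only [indicator_of_mem hmem,
              indicator_of_notMem (show y ∉ Ioi a from not_lt.2 hya), add_zero]
            calc y ^ (n - 1) * f y ≤ y ^ (n - 1) * (K * a ^ (-(n : ℝ))) := by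
                  gcongr; exact hfK y hmem
              _ = near y := by ring
          · simp only [indicator_of_notMem (fun h : y ∈ Ioc 0 a ↦ hay.not_ge h.2),
              indicator_of_mem (show y ∈ Ioi a from hay), zero_add]
            calc y ^ (n - 1) * f y ≤ y ^ (n - 1) * (L * a ^ ε * y ^ (-(n : ℝ) - ε)) := by
                  gcongr; exact hfL y hay
              _ = L * a ^ ε * (y ^ ((n - 1 : ℕ) : ℝ) * y ^ (-(n : ℝ) - ε)) := by
                  rw [Real.rpow_natCast]; ring
              _ = far y := by
                  rw [← Real.rpow_add hy, Nat.cast_pred hn]; simp only [far]; ring_nf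
    _ = K / n + L / ε := by
        rw [integral_add (hnear_int.integrable_indicator measurableSet_Ioc).restrict
            (hfar_int.integrable_indicator measurableSet_Ioi).restrict,
          setIntegral_indicator measurableSet_Ioc, setIntegral_indicator measurableSet_Ioi,
          inter_eq_self_of_subset_right Ioc_subset_Ioi_self,
          inter_eq_self_of_subset_right (Ioi_subset_Ioi ha.le), hnear, hfar]

theorem min_integral_heat_kernel_bound_general (d : ℕ) (hd : 0 < d)
    (φ φinv : ℝ → ℝ) (c₀ δ₀ : ℝ) (hc₀ : 0 < c₀) (hδ₀ : δ₀ ∈ Set.Ioc (0 : ℝ) 1)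
    (hpos : ∀ x > (0 : ℝ), 0 < φ x)
    (hbij : ∀ x > (0 : ℝ), 0 < φinv x ∧ φ (φinv x) = x)
    (hsc : ∀ r R : ℝ, 0 < r → r < R → c₀ * (R / r) ^ δ₀ ≤ φ R / φ r)
    (k : ℕ) (ν : ℝ) (hν : 0 < ν) :
    ∃ C : ℝ, 0 < C ∧ ∀ t > (0 : ℝ),
      (∫ x : EuclideanSpace ℝ (Fin d),
        min (t ^ (-(ν * k)) * (φinv t⁻¹) ^ ((d : ℝ) / 2))
          (t ^ (ν - ν * k) * (φ (‖x‖ ^ (-2 : ℝ))) ^ ν / ‖x‖ ^ (d : ℝ)))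
      ≤ C * t ^ (-(ν * k)) := by
  have : Nonempty (Fin d) := Fin.pos_iff_nonempty.mp hd
  have hε : 0 < 2 * δ₀ * ν := by have := hδ₀.1; positivity
  have hball : 0 < volume.real (Metric.ball (0 : EuclideanSpace ℝ (Fin d)) 1) :=
    ENNReal.toReal_pos (Metric.measure_ball_pos volume 0 one_pos).ne' measure_ball_lt_top.ne
  refine ⟨d * volume.real (Metric.ball (0 : EuclideanSpace ℝ (Fin d)) 1) *
    (1 / d + c₀ ^ (-ν) / (2 * δ₀ * ν)), by positivity, fun t ht ↦ ?_⟩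
  obtain ⟨hP, hφP⟩ := hbij t⁻¹ (inv_pos.2 ht)
  set a := φinv t⁻¹ ^ (-(1 / 2) : ℝ) with ha_def
  have ha : 0 < a := by positivity
  have haP : a ^ (-2 : ℝ) = φinv t⁻¹ := by
    rw [ha_def, ← Real.rpow_mul hP.le]; norm_num
  have hA : φinv t⁻¹ ^ ((d : ℝ) / 2) = a ^ (-(d : ℝ)) := by
    rw [ha_def, ← Real.rpow_mul hP.le]; ring_nf
  rw [integral_fun_norm_addHaar volume (fun y ↦ min (t ^ (-(ν * k)) * (φinv t⁻¹) ^ ((d : ℝ) / 2))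
    (t ^ (ν - ν * k) * (φ (y ^ (-2 : ℝ))) ^ ν / y ^ (d : ℝ))), finrank_euclideanSpace_fin]
  simp only [nsmul_eq_mul, smul_eq_mul]
  calc _ ≤ (d : ℝ) * (volume.real (Metric.ball (0 : EuclideanSpace ℝ (Fin d)) 1) *
        (t ^ (-(ν * k)) / d + t ^ (-(ν * k)) * c₀ ^ (-ν) / (2 * δ₀ * ν))) := by
        gcongr
        refine integral_Ioi_pow_mul_le hd ha hε (fun y hy ↦ ?_) (fun y _ ↦ ?_) (fun y hy ↦ ?_)
        · have := hpos _ (Real.rpow_pos_of_pos hy (-2))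
          positivity
        · rw [hA]
          exact min_le_left _ _
        · exact (min_le_right _ _).trans <|
            HasLowerScaling.mul_rpow_div_rpow_le hsc hc₀ hpos ha hy ht hν.le (haP ▸ hφP)
    _ = _ := by ring

/-- For `φ` an increasing bijection of `(0,∞)` with the lower scaling
condition, `∫_{ℝ^d} min(t^{-νk} (φ⁻¹(t⁻¹))^{d/2}, t^{ν-νk} (φ(|x|⁻²))^ν / |x|^d) dx
≤ C t^{-νk}` uniformly in `t > 0`. -/
theorem min_integral_heat_kernel_bound (d : ℕ) (hd : 0 < d)
    (φ φinv : ℝ → ℝ) (c₀ δ₀ : ℝ) (hc₀ : 0 < c₀) (hδ₀ : δ₀ ∈ Set.Ioc (0 : ℝ) 1)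
    (hpos : ∀ x > (0 : ℝ), 0 < φ x)
    (hmono : StrictMonoOn φ (Set.Ioi 0))
    (hbij : ∀ x > (0 : ℝ), 0 < φinv x ∧ φ (φinv x) = x)
    (hinv : ∀ x > (0 : ℝ), φinv (φ x) = x)
    (hsc : ∀ r R : ℝ, 0 < r → r < R → c₀ * (R / r) ^ δ₀ ≤ φ R / φ r)
    (k : ℕ) (ν : ℝ) (hν : 0 < ν) :
    ∃ C : ℝ, 0 < C ∧ ∀ t > (0 : ℝ),
      (∫ x : EuclideanSpace ℝ (Fin d),
        min (t ^ (-(ν * k)) * (φinv t⁻¹) ^ ((d : ℝ) / 2))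
          (t ^ (ν - ν * k) * (φ (‖x‖ ^ (-2 : ℝ))) ^ ν / ‖x‖ ^ (d : ℝ)))
      ≤ C * t ^ (-(ν * k)) :=
  min_integral_heat_kernel_bound_general d hd φ φinv c₀ δ₀ hc₀ hδ₀ hpos hbij hsc k ν hν
end

section
/- Let φ₁,…,φ_ℓ be Bernstein functions, each satisfying the lower scaling condition with common constants c₀ > 0, δ₀ ∈ (0,1], and suppose a Bernstein function φ_n satisfies sup_{r>1} φ_n(r)/φ_i(r) ≤ C_i for all i = 1,…,ℓ. Then there is a constant C such that for all ξ = (ξ₁,…,ξ_ℓ) ∈ ℝ^{d₁}×⋯×ℝ^{d_ℓ} with |ξ| ≥ 2, φ_n(|ξ|²) / (1 + φ₁(|ξ₁|²) + ⋯ + φ_ℓ(|ξ_ℓ|²)) ≤ C. -/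
/-!
A Bernstein function `φ` is concave on `(0, ∞)` with `φ(0+) = 0`, so `φ(x) / x` is nonincreasing
there: `φ(R) ≤ (R / r) φ(r)` for `0 < r ≤ R`. Given `|ξ|² ≥ 4`, choose `j` with `|ξ_j|²` maximal, so
`|ξ|² ≤ ℓ |ξ_j|²`. Then `φₙ(|ξ|²) ≤ Cⱼ φⱼ(|ξ|²) ≤ ℓ Cⱼ φⱼ(|ξ_j|²)`, and `φⱼ(|ξ_j|²)` is at most the
denominator.
-/

open Set Filter

/-- A Bernstein function: positive on `(0,∞)`, smooth there, `φ(0+) = 0`, and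
`(-1)^n φ^{(n)} ≤ 0` on `(0,∞)` for all `n ≥ 1`. -/
def IsBernstein (φ : ℝ → ℝ) : Prop :=
  (∀ x > (0 : ℝ), 0 < φ x) ∧ ContDiffOn ℝ (⊤ : ℕ∞) φ (Set.Ioi 0) ∧
    Filter.Tendsto φ (nhdsWithin 0 (Set.Ioi 0)) (nhds 0) ∧
    ∀ n : ℕ, 1 ≤ n → ∀ x > (0 : ℝ), (-1 : ℝ) ^ n * iteratedDeriv n φ x ≤ 0

open Topology

theorem ConcaveOn.antitoneOn_div_of_tendsto_zero {f : ℝ → ℝ} (hf : ConcaveOn ℝ (Ioi 0) f)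
    (hf0 : Tendsto f (𝓝[>] 0) (𝓝 0)) : AntitoneOn (fun x => f x / x) (Ioi 0) := by
  have hslope : ∀ x : ℝ, 0 < x →
      Tendsto (fun a => (f x - f a) / (x - a)) (𝓝[>] 0) (𝓝 (f x / x)) := fun x hx => by
    have hid : Tendsto (fun a : ℝ => a) (𝓝[>] 0) (𝓝 0) := nhdsWithin_le_nhds
    have := (tendsto_const_nhds (x := f x)).sub hf0 |>.div (tendsto_const_nhds.sub hid)
      (by rw [sub_zero]; exact hx.ne')
    rwa [sub_zero, sub_zero] at this
  intro t (ht : 0 < t) S (hS : 0 < S) hts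
  refine le_of_tendsto_of_tendsto (hslope S hS) (hslope t ht) ?_
  filter_upwards [Ioo_mem_nhdsGT ht] with a ⟨ha, hat⟩
  have := hf.neg.secant_mono ha ht hS hat.ne' (hat.trans_le hts).ne' hts
  simp only [Pi.neg_apply, neg_sub_neg] at this
  rwa [← neg_le_neg_iff, ← neg_div, ← neg_div, neg_sub, neg_sub]

theorem IsBernstein.concaveOn {φ : ℝ → ℝ} (h : IsBernstein φ) : ConcaveOn ℝ (Ioi 0) φ := by
  obtain ⟨-, hsmooth, -, hderiv⟩ := h
  refine concaveOn_of_deriv2_nonpos' (convex_Ioi 0) (hsmooth.differentiableOn (by simp))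
    ((hsmooth.deriv_of_isOpen isOpen_Ioi (m := 1) (by norm_cast)).differentiableOn (by simp))
    fun x hx => ?_
  simpa [iteratedDeriv_eq_iterate] using hderiv 2 one_le_two x hx

theorem Fintype.exists_sum_le_card_nsmul {ι M : Type*} [Fintype ι] [Nonempty ι]
    [AddCommMonoid M] [LinearOrder M] [IsOrderedAddMonoid M] (f : ι → M) :
    ∃ j, ∑ i, f i ≤ Fintype.card ι • f j := by
  obtain ⟨j, -, hj⟩ := Finset.univ.exists_max_image f Finset.univ_nonempty
  exact ⟨j, Finset.sum_le_card_nsmul _ _ _ fun i _ => hj i (Finset.mem_univ i)⟩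

namespace IsBernstein

variable {φ : ℝ → ℝ}

theorem antitoneOn_div (h : IsBernstein φ) : AntitoneOn (fun x => φ x / x) (Ioi 0) :=
  h.concaveOn.antitoneOn_div_of_tendsto_zero h.2.2.1

theorem apply_le_mul_apply_of_le_mul (h : IsBernstein φ) {r R c : ℝ} (hr : 0 < r) (hrR : r ≤ R)
    (hRc : R ≤ c * r) : φ R ≤ c * φ r := by
  have hR : 0 < R := hr.trans_le hrR
  calc φ R = R * (φ R / R) := by field_simp
    _ ≤ c * r * (φ r / r) :=
      mul_le_mul hRc (h.antitoneOn_div hr hR hrR) (div_pos (h.1 R hR) hR).le (hR.le.trans hRc)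
    _ = c * φ r := by field_simp

theorem nonneg_of_apply_zero (h : IsBernstein φ) (h0 : φ 0 = 0) {x : ℝ} (hx : 0 ≤ x) :
    0 ≤ φ x := by
  rcases hx.eq_or_lt with rfl | hx
  · exact h0.ge
  · exact (h.1 x hx).le

end IsBernstein

theorem exists_apply_sum_le_card_mul {ι : Type*} [Fintype ι] {φ : ι → ℝ → ℝ}
    (hφ : ∀ i, IsBernstein (φ i)) {t : ι → ℝ} (ht : ∀ i, 0 ≤ t i) (hsum : 0 < ∑ i, t i) :
    ∃ j, φ j (∑ i, t i) ≤ Fintype.card ι * φ j (t j) := by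
  obtain ⟨i, -, -⟩ := Finset.exists_ne_zero_of_sum_ne_zero hsum.ne'
  have : Nonempty ι := ⟨i⟩
  obtain ⟨j, hj⟩ := Fintype.exists_sum_le_card_nsmul t
  rw [nsmul_eq_mul] at hj
  have htj : 0 < t j := by
    by_contra! h
    nlinarith
  exact ⟨j, (hφ j).apply_le_mul_apply_of_le_mul htj
    (Finset.single_le_sum (fun i _ => ht i) (Finset.mem_univ j)) hj⟩

theorem phi_n_ratio_bounded_general (ℓ : ℕ) (d : Fin ℓ → ℕ)
    (φ : Fin ℓ → ℝ → ℝ) (φn : ℝ → ℝ)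
    (hB : ∀ i, IsBernstein (φ i)) (hφ0 : ∀ i, φ i 0 = 0)
    (Cc : Fin ℓ → ℝ)
    (hsup : ∀ i, ∀ r > (1 : ℝ), φn r / φ i r ≤ Cc i) :
    ∃ C : ℝ, 0 < C ∧ ∀ ξ : (∀ i, EuclideanSpace ℝ (Fin (d i))),
      4 ≤ ∑ i, ‖ξ i‖ ^ 2 →
      φn (∑ i, ‖ξ i‖ ^ 2) / (1 + ∑ i, φ i (‖ξ i‖ ^ 2)) ≤ C := by
  set K := ℓ * ∑ i, |Cc i|
  refine ⟨K + 1, by positivity, fun ξ hξ => ?_⟩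
  set T : Fin ℓ → ℝ := fun i => ‖ξ i‖ ^ 2
  set S := ∑ i, T i
  have hφT (i : Fin ℓ) : 0 ≤ φ i (T i) := (hB i).nonneg_of_apply_zero (hφ0 i) (sq_nonneg _)
  obtain ⟨j, hj⟩ := exists_apply_sum_le_card_mul hB (fun i => sq_nonneg ‖ξ i‖) (by linarith)
  rw [Fintype.card_fin] at hj
  have hφjS : 0 < φ j S := (hB j).1 S (by linarith)
  have hden : 0 ≤ 1 + ∑ i, φ i (T i) :=
    add_nonneg zero_le_one (Finset.sum_nonneg fun i _ => hφT i)
  refine (div_le_of_le_mul₀ hden (by positivity) ?_).trans (le_add_of_nonneg_right zero_le_one)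
  calc φn S ≤ |Cc j| * φ j S :=
        ((div_le_iff₀ hφjS).mp (hsup j S (by linarith))).trans
          (mul_le_mul_of_nonneg_right (le_abs_self _) hφjS.le)
    _ ≤ |Cc j| * (ℓ * φ j (T j)) := by gcongr
    _ = ℓ * (|Cc j| * φ j (T j)) := by ring
    _ ≤ K * (1 + ∑ i, φ i (T i)) := by
        rw [mul_assoc]
        gcongr
        · exact hφT j
        · exact Finset.single_le_sum (f := fun i => |Cc i|) (fun i _ => abs_nonneg _)
            (Finset.mem_univ j)
        · linarith [Finset.single_le_sum (fun i _ => hφT i) (Finset.mem_univ j)]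

/-- if Bernstein functions `φ₁,…,φ_ℓ` satisfy a common lower scaling
condition (and vanish at `0`), and a Bernstein function `φₙ` satisfies
`sup_{r>1} φₙ(r)/φᵢ(r) ≤ Cᵢ` for each `i`, then
`φₙ(|ξ|²)/(1 + Σᵢ φᵢ(|ξᵢ|²)) ≤ C` uniformly over `|ξ| ≥ 2`
(i.e. `Σᵢ |ξᵢ|² ≥ 4`). -/
theorem phi_n_ratio_bounded (ℓ : ℕ) (hℓ : 0 < ℓ) (d : Fin ℓ → ℕ)
    (φ : Fin ℓ → ℝ → ℝ) (φn : ℝ → ℝ) (c₀ δ₀ : ℝ)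
    (hc₀ : 0 < c₀) (hδ₀ : δ₀ ∈ Set.Ioc (0 : ℝ) 1)
    (hB : ∀ i, IsBernstein (φ i)) (hφ0 : ∀ i, φ i 0 = 0)
    (hBn : IsBernstein φn)
    (hsc : ∀ i, ∀ r R : ℝ, 0 < r → r < R → c₀ * (R / r) ^ δ₀ ≤ φ i R / φ i r)
    (Cc : Fin ℓ → ℝ)
    (hsup : ∀ i, ∀ r > (1 : ℝ), φn r / φ i r ≤ Cc i) :
    ∃ C : ℝ, 0 < C ∧ ∀ ξ : (∀ i, EuclideanSpace ℝ (Fin (d i))),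
      4 ≤ ∑ i, ‖ξ i‖ ^ 2 →
      φn (∑ i, ‖ξ i‖ ^ 2) / (1 + ∑ i, φ i (‖ξ i‖ ^ 2)) ≤ C :=
  phi_n_ratio_bounded_general ℓ d φ φn hB hφ0 Cc hsup
end
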